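/- arXiv:1212.0781 — 2 statements merged into one kernel-verified Lean document; each statement's English description precedes it below -/
import Mathlib

section
/- For all t ∈ [0,T] and h ∈ H_w one has 0 ≤ Ψ(t,h) ≤ K, and there exists a constant C₁ > 0, depending only on w and T, such that |Ψ(t,h) − Ψ(t,g)| ≤ C₁‖h − g‖_w for all g, h ∈ H_w and all t ∈ [0,T]. -/
open MeasureTheory Set Filter

/-- Hypotheses on the weight function `w`. -/
def GoodWeight (w : ℝ → ℝ) : Prop :=
  (∀ x, 0 ≤ x → 1 ≤ w x) ∧ MonotoneOn w (Set.Ici 0) ∧ ContDiffOn ℝ 1 w (Set.Ici 0) ∧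
    MeasureTheory.IntegrableOn (fun x => (w x) ^ (-(1/3) : ℝ)) (Set.Ici 0)

/-- `h` belongs to `H_w` with weak derivative `h'`. -/
def IsHw (w h h' : ℝ → ℝ) : Prop :=
  Measurable h' ∧
  MeasureTheory.IntegrableOn (fun x => (h' x) ^ 2 * w x) (Set.Ici 0) ∧
  ∀ x, 0 ≤ x → h x = h 0 + ∫ y in (0:ℝ)..x, h' y

/-- The `H_w` norm of `h` (with weak derivative `h'`). -/
noncomputable def normW (w h h' : ℝ → ℝ) : ℝ :=
  Real.sqrt ((h 0) ^ 2 + ∫ x in Set.Ici (0:ℝ), (h' x) ^ 2 * w x)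

/-- The American Put payoff `Ψ(t,h) = [K − exp(−∫₀^{T−t} h(x) dx)]⁺`. -/
noncomputable def Psi (T K t : ℝ) (h : ℝ → ℝ) : ℝ :=
  max (K - Real.exp (-(∫ x in (0:ℝ)..(T - t), h x))) 0

lemma aux_min_lip {K a b : ℝ} (hK0 : 0 ≤ K) (hK1 : K ≤ 1) (hab : a ≤ b) :
    min (Real.exp (-a)) K - min (Real.exp (-b)) K ≤ b - a := by
  have h1 : Real.exp (-b) = Real.exp (-a) * Real.exp (a - b) := by
    rw [← Real.exp_add]; ring_nf
  have h2 : a - b + 1 ≤ Real.exp (a - b) := Real.add_one_le_exp _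
  have h3 : (0:ℝ) < Real.exp (-a) := Real.exp_pos _
  have h4 : Real.exp (a - b) ≤ 1 := Real.exp_le_one_iff.2 (by linarith)
  have h5 : (0:ℝ) < Real.exp (a - b) := Real.exp_pos _
  rcases le_total (Real.exp (-a)) K with h | h
  · have hb : Real.exp (-b) ≤ K := by nlinarith
    rw [min_eq_left h, min_eq_left hb]
    nlinarith
  · rw [min_eq_right h]
    rcases le_total (Real.exp (-b)) K with h' | h'
    · rw [min_eq_left h']; nlinarith
    · rw [min_eq_right h']; linarith

lemma aux_abs_min_lip {K a b : ℝ} (hK0 : 0 ≤ K) (hK1 : K ≤ 1) :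
    |min (Real.exp (-a)) K - min (Real.exp (-b)) K| ≤ |a - b| := by
  rcases le_total a b with hab | hab
  · have hm : min (Real.exp (-b)) K ≤ min (Real.exp (-a)) K :=
      min_le_min (Real.exp_le_exp.2 (by linarith)) le_rfl
    rw [abs_of_nonneg (by linarith), abs_of_nonpos (by linarith)]
    have := aux_min_lip hK0 hK1 hab
    linarith
  · have hm : min (Real.exp (-a)) K ≤ min (Real.exp (-b)) K :=
      min_le_min (Real.exp_le_exp.2 (by linarith)) le_rfl
    rw [abs_of_nonpos (by linarith), abs_of_nonneg (by linarith)]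
    have := aux_min_lip hK0 hK1 hab
    linarith

lemma aux_max_min (K a : ℝ) : max (K - a) 0 = K - min a K := by
  rcases le_total a K with h | h
  · rw [min_eq_left h, max_eq_left (by linarith)]
  · rw [min_eq_right h, max_eq_right (by linarith), sub_self]

lemma aux_Ioc_sub {x : ℝ} : Set.Ioc (0:ℝ) x ⊆ Set.Ici 0 := fun y hy => hy.1.le

lemma aux_deriv_int {w h h' : ℝ → ℝ} (hw : GoodWeight w) (hh : IsHw w h h')
    {x : ℝ} (hx : 0 ≤ x) : IntervalIntegrable h' volume 0 x := by
  rw [intervalIntegrable_iff_integrableOn_Ioc_of_le hx]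
  have hint : IntegrableOn (fun y => 1 + h' y ^ 2 * w y) (Set.Ioc 0 x) :=
    (integrableOn_const (measure_Ioc_lt_top.ne)).add (hh.2.1.mono_set aux_Ioc_sub)
  refine Integrable.mono' hint hh.1.aestronglyMeasurable ?_
  refine (ae_restrict_iff' measurableSet_Ioc).2 (ae_of_all _ fun y hy => ?_)
  have hw1 : 1 ≤ w y := hw.1 y hy.1.le
  rw [Real.norm_eq_abs]
  nlinarith [sq_nonneg (|h' y| - 1), abs_nonneg (h' y), sq_abs (h' y), sq_nonneg (h' y)]

lemma aux_contOn {w h h' : ℝ → ℝ} (hw : GoodWeight w) (hh : IsHw w h h')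
    {s : ℝ} (hs : 0 ≤ s) : ContinuousOn h (Set.Icc 0 s) := by
  have hint : IntegrableOn h' (Set.uIcc 0 s) := by
    rw [uIcc_of_le hs, integrableOn_Icc_iff_integrableOn_Ioc]
    exact ((intervalIntegrable_iff_integrableOn_Ioc_of_le hs).1 (aux_deriv_int hw hh hs))
  have hcont := intervalIntegral.continuousOn_primitive_interval (a := 0) (b := s) (f := h') hint
  rw [uIcc_of_le hs] at hcont
  exact (continuousOn_const.add hcont).congr fun y hy => hh.2.2 y hy.1

lemma aux_isHw_sub {w g g' h h' : ℝ → ℝ} (hw : GoodWeight w)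
    (hg : IsHw w g g') (hh : IsHw w h h') :
    IsHw w (fun x => h x - g x) (fun x => h' x - g' x) := by
  refine ⟨hh.1.sub hg.1, ?_, ?_⟩
  · have hwm : AEStronglyMeasurable w (volume.restrict (Set.Ici 0)) :=
      hw.2.2.1.continuousOn.aestronglyMeasurable measurableSet_Ici
    have hm : AEStronglyMeasurable (fun y => (h' y - g' y) ^ 2 * w y)
        (volume.restrict (Set.Ici 0)) :=
      (((hh.1.sub hg.1).pow_const 2).aestronglyMeasurable).mul hwm
    refine Integrable.mono' ((hh.2.1.const_mul 2).add (hg.2.1.const_mul 2)) hm ?_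
    refine (ae_restrict_iff' measurableSet_Ici).2 (ae_of_all _ fun y hy => ?_)
    have hw1 : 1 ≤ w y := hw.1 y hy
    simp only [Pi.add_apply]
    rw [Real.norm_eq_abs, abs_of_nonneg (by positivity)]
    nlinarith [sq_nonneg (h' y + g' y), sq_nonneg (h' y - g' y)]
  · intro x hx
    simp only
    rw [hh.2.2 x hx, hg.2.2 x hx,
      intervalIntegral.integral_sub (aux_deriv_int hw hh hx) (aux_deriv_int hw hg hx)]
    ring

lemma aux_cs {μ : Measure ℝ} {F G : ℝ → ℝ} (hF0 : 0 ≤ᵐ[μ] F) (hG0 : 0 ≤ᵐ[μ] G)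
    (hFm : AEStronglyMeasurable F μ) (hGm : AEStronglyMeasurable G μ)
    (hF2 : Integrable (fun y => F y ^ 2) μ) (hG2 : Integrable (fun y => G y ^ 2) μ) :
    ∫ y, F y * G y ∂μ ≤ Real.sqrt (∫ y, F y ^ 2 ∂μ) * Real.sqrt (∫ y, G y ^ 2 ∂μ) := by
  have h2 : Real.HolderConjugate 2 2 := Real.HolderConjugate.two_two
  have e2 : ENNReal.ofReal (2:ℝ) = 2 := by norm_num [ENNReal.ofReal_ofNat]
  have hF : MemLp F (ENNReal.ofReal 2) μ := by
    rw [e2]; exact (memLp_two_iff_integrable_sq hFm).2 hF2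
  have hG : MemLp G (ENNReal.ofReal 2) μ := by
    rw [e2]; exact (memLp_two_iff_integrable_sq hGm).2 hG2
  have h := integral_mul_le_Lp_mul_Lq_of_nonneg h2 hF0 hG0 hF hG
  have hrw : ∀ x : ℝ, x ^ (2:ℝ) = x ^ 2 := fun x => by
    rw [show (2:ℝ) = ((2:ℕ):ℝ) by norm_num, Real.rpow_natCast]
  simp_rw [hrw] at h
  rwa [Real.sqrt_eq_rpow, Real.sqrt_eq_rpow]

lemma aux_prim_bound {w f f' : ℝ → ℝ} (hw : GoodWeight w) (hf : IsHw w f f')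
    {x : ℝ} (hx : 0 ≤ x) :
    |f x| ≤ (1 + Real.sqrt (∫ y in Set.Ici (0:ℝ), w y ^ (-(1/3):ℝ))) * normW w f f' := by
  set I : ℝ := ∫ y in Set.Ici (0:ℝ), w y ^ (-(1/3):ℝ) with hI
  set J : ℝ := ∫ y in Set.Ici (0:ℝ), f' y ^ 2 * w y with hJdef
  set N : ℝ := normW w f f' with hNdef
  have hJ0 : 0 ≤ J := setIntegral_nonneg measurableSet_Ici
    (fun y hy => mul_nonneg (sq_nonneg _) (by linarith [hw.1 y hy]))
  have hI0 : 0 ≤ I := setIntegral_nonneg measurableSet_Ici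
    (fun y hy => Real.rpow_nonneg (by linarith [hw.1 y hy]) _)
  have h0N : |f 0| ≤ N := by
    rw [← Real.sqrt_sq_eq_abs]
    exact Real.sqrt_le_sqrt (by nlinarith)
  have hJN : Real.sqrt J ≤ N := Real.sqrt_le_sqrt (by nlinarith [sq_nonneg (f 0)])
  have hN0 : 0 ≤ N := Real.sqrt_nonneg _
  -- Cauchy-Schwarz on Ioc 0 x
  set μ : Measure ℝ := volume.restrict (Set.Ioc 0 x) with hμ
  set F : ℝ → ℝ := fun y => |f' y| * Real.sqrt (w y) with hF
  set G : ℝ → ℝ := fun y => (Real.sqrt (w y))⁻¹ with hG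
  have hle : μ ≤ volume.restrict (Set.Ici 0) := Measure.restrict_mono aux_Ioc_sub le_rfl
  have hwm : AEStronglyMeasurable w μ :=
    (hw.2.2.1.continuousOn.aestronglyMeasurable measurableSet_Ici).mono_measure hle
  have hsw : AEStronglyMeasurable (fun y => Real.sqrt (w y)) μ :=
    Real.continuous_sqrt.comp_aestronglyMeasurable hwm
  have hae : ∀ᵐ y ∂μ, 1 ≤ w y :=
    (ae_restrict_iff' measurableSet_Ioc).2 (ae_of_all _ fun y hy => hw.1 y hy.1.le)
  have hFm : AEStronglyMeasurable F μ := (hf.1.abs.aestronglyMeasurable).mul hsw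
  have hGm : AEStronglyMeasurable G μ := hsw.aemeasurable.inv.aestronglyMeasurable
  have hF0 : 0 ≤ᵐ[μ] F := ae_of_all _ fun y => mul_nonneg (abs_nonneg _) (Real.sqrt_nonneg _)
  have hG0 : 0 ≤ᵐ[μ] G := ae_of_all _ fun y => by positivity
  have hInt : Integrable (fun y => f' y ^ 2 * w y) μ := hf.2.1.mono_set aux_Ioc_sub
  have hF2eq : (fun y => F y ^ 2) =ᵐ[μ] fun y => f' y ^ 2 * w y := by
    filter_upwards [hae] with y hy
    rw [hF]; simp only
    rw [mul_pow, sq_abs, Real.sq_sqrt (by linarith)]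
  have hF2 : Integrable (fun y => F y ^ 2) μ := hInt.congr hF2eq.symm
  have hG2 : Integrable (fun y => G y ^ 2) μ := by
    refine Integrable.mono' (integrable_const 1) (hGm.pow 2) ?_
    filter_upwards [hae] with y hy
    have h1 : 1 ≤ Real.sqrt (w y) := by
      rw [show (1:ℝ) = Real.sqrt 1 by simp]; exact Real.sqrt_le_sqrt (by linarith)
    rw [Real.norm_eq_abs, abs_of_nonneg (by positivity)]
    rw [inv_pow]
    refine inv_le_one_of_one_le₀ (by nlinarith)
  have hcs := aux_cs hF0 hG0 hFm hGm hF2 hG2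
  -- identify the three integrals
  have hFG : ∫ y, F y * G y ∂μ = ∫ y in Set.Ioc 0 x, |f' y| := by
    rw [hμ]
    refine setIntegral_congr_fun measurableSet_Ioc fun y hy => ?_
    have h1 : (0:ℝ) < Real.sqrt (w y) := Real.sqrt_pos.2 (by linarith [hw.1 y hy.1.le])
    rw [hF, hG]; simp only
    rw [mul_assoc, mul_inv_cancel₀ (ne_of_gt h1), mul_one]
  have hFJ : ∫ y, F y ^ 2 ∂μ ≤ J := by
    have : ∫ y, F y ^ 2 ∂μ = ∫ y in Set.Ioc 0 x, f' y ^ 2 * w y := integral_congr_ae hF2eq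
    rw [this, hJdef]
    refine setIntegral_mono_set hf.2.1 ?_ (HasSubset.Subset.eventuallyLE aux_Ioc_sub)
    exact (ae_restrict_iff' measurableSet_Ici).2 (ae_of_all _ fun y hy =>
      mul_nonneg (sq_nonneg _) (by linarith [hw.1 y hy]))
  have hGI : ∫ y, G y ^ 2 ∂μ ≤ I := by
    have h1 : ∫ y, G y ^ 2 ∂μ ≤ ∫ y in Set.Ioc 0 x, w y ^ (-(1/3):ℝ) := by
      rw [hμ]
      refine setIntegral_mono_on hG2 (hw.2.2.2.mono_set aux_Ioc_sub) measurableSet_Ioc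
        fun y hy => ?_
      have hw1 : 1 ≤ w y := hw.1 y hy.1.le
      rw [hG]; simp only
      rw [inv_pow, Real.sq_sqrt (by linarith), ← Real.rpow_neg_one (w y)]
      exact Real.rpow_le_rpow_of_exponent_le hw1 (by norm_num)
    refine h1.trans ?_
    rw [hI]
    refine setIntegral_mono_set hw.2.2.2 ?_ (HasSubset.Subset.eventuallyLE aux_Ioc_sub)
    exact (ae_restrict_iff' measurableSet_Ici).2 (ae_of_all _ fun y hy =>
      Real.rpow_nonneg (by linarith [hw.1 y hy]) _)
  have habs : ∫ y in Set.Ioc 0 x, |f' y| ≤ Real.sqrt J * Real.sqrt I := by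
    rw [← hFG]
    refine hcs.trans (mul_le_mul (Real.sqrt_le_sqrt hFJ) (Real.sqrt_le_sqrt hGI)
      (Real.sqrt_nonneg _) (Real.sqrt_nonneg _))
  -- assemble
  have hfx := hf.2.2 x hx
  have h1 : |∫ y in (0:ℝ)..x, f' y| ≤ ∫ y in (0:ℝ)..x, |f' y| :=
    intervalIntegral.abs_integral_le_integral_abs hx
  have h2 : ∫ y in (0:ℝ)..x, |f' y| = ∫ y in Set.Ioc 0 x, |f' y| :=
    intervalIntegral.integral_of_le hx
  have hsqI : 0 ≤ Real.sqrt I := Real.sqrt_nonneg _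
  calc |f x| = |f 0 + ∫ y in (0:ℝ)..x, f' y| := by rw [hfx]
    _ ≤ |f 0| + |∫ y in (0:ℝ)..x, f' y| := abs_add_le _ _
    _ ≤ N + Real.sqrt J * Real.sqrt I := by
        rw [h2] at h1; linarith [h1.trans habs]
    _ ≤ N + N * Real.sqrt I := by nlinarith
    _ = (1 + Real.sqrt I) * N := by ring


/-- bounds and space-Lipschitz continuity of the payoff `Ψ`. -/
theorem stmt15 (w : ℝ → ℝ) (hw : GoodWeight w) (T K : ℝ)
    (hT : 0 < T) (hK0 : 0 < K) (hK1 : K < 1) :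
    (∀ t ∈ Set.Icc (0:ℝ) T, ∀ h h' : ℝ → ℝ, IsHw w h h' →
      0 ≤ Psi T K t h ∧ Psi T K t h ≤ K) ∧
    ∃ C₁ > (0:ℝ), ∀ t ∈ Set.Icc (0:ℝ) T, ∀ g g' h h' : ℝ → ℝ,
      IsHw w g g' → IsHw w h h' →
      |Psi T K t h - Psi T K t g| ≤
        C₁ * normW w (fun x => h x - g x) (fun x => h' x - g' x) := by
  constructor
  · intro t ht h h' _
    exact ⟨le_max_right _ _,
      max_le (by linarith [Real.exp_pos (-(∫ x in (0:ℝ)..(T - t), h x))]) hK0.le⟩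
  · set I : ℝ := ∫ y in Set.Ici (0:ℝ), w y ^ (-(1/3):ℝ) with hI
    have hsqI : 0 ≤ Real.sqrt I := Real.sqrt_nonneg _
    refine ⟨T * (1 + Real.sqrt I) + 1, by positivity, ?_⟩
    intro t ht g g' h h' hg hh
    set s : ℝ := T - t with hsdef
    have hs0 : 0 ≤ s := by simp only [hsdef]; linarith [ht.2]
    have hsT : s ≤ T := by simp only [hsdef]; linarith [ht.1]
    set N : ℝ := normW w (fun x => h x - g x) (fun x => h' x - g' x) with hN
    have hN0 : 0 ≤ N := Real.sqrt_nonneg _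
    have hfsub := aux_isHw_sub hw hg hh
    have hbd : ∀ y ∈ Set.uIoc (0:ℝ) s, ‖h y - g y‖ ≤ (1 + Real.sqrt I) * N := by
      intro y hy
      rw [Set.uIoc_of_le hs0] at hy
      rw [Real.norm_eq_abs]
      exact aux_prim_bound hw hfsub hy.1.le
    have hInth : IntervalIntegrable h volume 0 s := by
      apply ContinuousOn.intervalIntegrable
      rw [Set.uIcc_of_le hs0]; exact aux_contOn hw hh hs0
    have hIntg : IntervalIntegrable g volume 0 s := by
      apply ContinuousOn.intervalIntegrable
      rw [Set.uIcc_of_le hs0]; exact aux_contOn hw hg hs0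
    have hsub : (∫ x in (0:ℝ)..s, h x) - (∫ x in (0:ℝ)..s, g x)
        = ∫ x in (0:ℝ)..s, (h x - g x) :=
      (intervalIntegral.integral_sub hInth hIntg).symm
    have hkey : |(∫ x in (0:ℝ)..s, h x) - (∫ x in (0:ℝ)..s, g x)|
        ≤ T * ((1 + Real.sqrt I) * N) := by
      rw [hsub]
      have hle := intervalIntegral.norm_integral_le_of_norm_le_const hbd
      rw [Real.norm_eq_abs, sub_zero, abs_of_nonneg hs0] at hle
      have hmul : (1 + Real.sqrt I) * N * s ≤ (1 + Real.sqrt I) * N * T :=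
        mul_le_mul_of_nonneg_left hsT (by positivity)
      calc |∫ x in (0:ℝ)..s, (h x - g x)| ≤ (1 + Real.sqrt I) * N * s := hle
        _ ≤ (1 + Real.sqrt I) * N * T := hmul
        _ = T * ((1 + Real.sqrt I) * N) := by ring
    have hPsi : ∀ φ : ℝ → ℝ,
        Psi T K t φ = K - min (Real.exp (-(∫ x in (0:ℝ)..s, φ x))) K := by
      intro φ
      simp only [Psi, ← hsdef]
      exact aux_max_min K _
    rw [hPsi h, hPsi g]
    have hlip := aux_abs_min_lip (K := K) (a := ∫ x in (0:ℝ)..s, g x)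
      (b := ∫ x in (0:ℝ)..s, h x) hK0.le hK1.le
    calc |(K - min (Real.exp (-(∫ x in (0:ℝ)..s, h x))) K)
          - (K - min (Real.exp (-(∫ x in (0:ℝ)..s, g x))) K)|
        = |min (Real.exp (-(∫ x in (0:ℝ)..s, g x))) K
            - min (Real.exp (-(∫ x in (0:ℝ)..s, h x))) K| := by
          rw [show (K - min (Real.exp (-(∫ x in (0:ℝ)..s, h x))) K)
              - (K - min (Real.exp (-(∫ x in (0:ℝ)..s, g x))) K)
              = min (Real.exp (-(∫ x in (0:ℝ)..s, g x))) K
                - min (Real.exp (-(∫ x in (0:ℝ)..s, h x))) K from by ring]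
      _ ≤ |(∫ x in (0:ℝ)..s, g x) - (∫ x in (0:ℝ)..s, h x)| := hlip
      _ = |(∫ x in (0:ℝ)..s, h x) - (∫ x in (0:ℝ)..s, g x)| := abs_sub_comm _ _
      _ ≤ T * ((1 + Real.sqrt I) * N) := hkey
      _ ≤ (T * (1 + Real.sqrt I) + 1) * N := by nlinarith
end

section
/- There exists a constant C₂ > 0, depending only on w, such that |Ψ(s,h) − Ψ(t,h)| ≤ C₂‖h‖_w · |t − s| for every h ∈ H_w and all s, t ∈ [0,T] with s ≤ t. -/
open MeasureTheory Set Filter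

lemma exp_lip {a b : ℝ} (ha : 0 ≤ a) (hab : a ≤ b) :
    Real.exp (-a) - Real.exp (-b) ≤ b - a := by
  have h1 : Real.exp (-a) ≤ 1 := Real.exp_le_one_iff.mpr (by linarith)
  have h2 : Real.exp (-a) * ((a - b) + 1) ≤ Real.exp (-a) * Real.exp (a - b) :=
    mul_le_mul_of_nonneg_left (Real.add_one_le_exp _) (Real.exp_pos _).le
  rw [← Real.exp_add] at h2
  have h3 : -a + (a - b) = -b := by ring
  rw [h3] at h2
  nlinarith [Real.exp_pos (-a), Real.exp_pos (-b)]

lemma phi_lip {K : ℝ} (hK0 : 0 < K) (hK1 : K < 1) {u v : ℝ} (huv : u ≤ v) :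
    |max (K - Real.exp (-v)) 0 - max (K - Real.exp (-u)) 0| ≤ v - u := by
  have hmono : max (K - Real.exp (-u)) 0 ≤ max (K - Real.exp (-v)) 0 := by
    have : Real.exp (-v) ≤ Real.exp (-u) := Real.exp_le_exp.mpr (by linarith)
    exact max_le_max (by linarith) le_rfl
  rw [abs_of_nonneg (by linarith)]
  rcases le_or_gt (K - Real.exp (-v)) 0 with hv | hv
  · have h1 : max (K - Real.exp (-v)) 0 = 0 := max_eq_right hv
    have h2 : max (K - Real.exp (-u)) 0 = 0 := le_antisymm (hmono.trans h1.le) (le_max_right _ _)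
    rw [h1, h2]; linarith
  · set c : ℝ := -Real.log K with hc
    have hc0 : 0 ≤ c := by
      have := Real.log_neg hK0 hK1; linarith
    have hec : Real.exp (-c) = K := by rw [hc, neg_neg, Real.exp_log hK0]
    have hvc : c ≤ v := by
      by_contra hcv
      push_neg at hcv
      have : Real.exp (-v) > Real.exp (-c) := Real.exp_lt_exp.mpr (by linarith)
      rw [hec] at this; linarith
    set u' : ℝ := max u c with hu'
    have hu'0 : 0 ≤ u' := le_trans hc0 (le_max_right _ _)
    have hu'v : u' ≤ v := max_le huv hvc
    have hlow : K - Real.exp (-u') ≤ max (K - Real.exp (-u)) 0 := by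
      rcases le_total c u with h | h
      · have : u' = u := max_eq_left h
        rw [this]; exact le_max_left _ _
      · have : u' = c := max_eq_right h
        rw [this, hec]; simp
    have hmax : max (K - Real.exp (-v)) 0 = K - Real.exp (-v) := max_eq_left hv.le
    have := exp_lip hu'0 hu'v
    have hle : u ≤ u' := le_max_left _ _
    linarith

lemma phi_lip' {K : ℝ} (hK0 : 0 < K) (hK1 : K < 1) (u v : ℝ) :
    |max (K - Real.exp (-v)) 0 - max (K - Real.exp (-u)) 0| ≤ |v - u| := by
  rcases le_total u v with h | h
  · exact (phi_lip hK0 hK1 h).trans (le_abs_self _)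
  · rw [abs_sub_comm]
    exact (phi_lip hK0 hK1 h).trans (by rw [abs_sub_comm]; exact le_abs_self _)

lemma winv_int {w : ℝ → ℝ} (hw : GoodWeight w) :
    IntegrableOn (fun x => (w x)⁻¹) (Set.Ici 0) := by
  obtain ⟨hw1, -, hwc, hwi⟩ := hw
  refine Integrable.mono' hwi ?_ ?_
  · exact ((hwc.continuousOn.aemeasurable measurableSet_Ici).inv).aestronglyMeasurable
  · refine (ae_restrict_iff' measurableSet_Ici).2 (ae_of_all _ fun x hx => ?_)
    have h1 : (1:ℝ) ≤ w x := hw1 x hx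
    have h0 : (0:ℝ) < w x := lt_of_lt_of_le one_pos h1
    rw [Real.norm_eq_abs, abs_of_nonneg (inv_nonneg.2 h0.le), ← Real.rpow_neg_one]
    exact Real.rpow_le_rpow_of_exponent_le h1 (by norm_num)

lemma winv_le {w : ℝ → ℝ} (hw : GoodWeight w) :
    (∫ x in Set.Ici (0:ℝ), (w x)⁻¹) ≤ ∫ x in Set.Ici (0:ℝ), (w x) ^ (-(1/3) : ℝ) := by
  refine setIntegral_mono_on (winv_int hw) hw.2.2.2 measurableSet_Ici fun x hx => ?_
  have h1 : (1:ℝ) ≤ w x := hw.1 x hx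
  rw [← Real.rpow_neg_one]
  exact Real.rpow_le_rpow_of_exponent_le h1 (by norm_num)

lemma habs_int {w h h' : ℝ → ℝ} (hw : GoodWeight w) (hh : IsHw w h h') :
    IntegrableOn (fun x => |h' x|) (Set.Ici 0) := by
  refine Integrable.mono' (hh.2.1.add (winv_int hw)) hh.1.abs.aestronglyMeasurable.restrict ?_
  refine (ae_restrict_iff' measurableSet_Ici).2 (ae_of_all _ fun x hx => ?_)
  have h1 : (1:ℝ) ≤ w x := hw.1 x hx
  have h0 : (0:ℝ) < w x := lt_of_lt_of_le one_pos h1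
  have ht : (0:ℝ) ≤ |h' x| := abs_nonneg _
  have hinv : w x * (w x)⁻¹ = 1 := mul_inv_cancel₀ (ne_of_gt h0)
  rw [Real.norm_eq_abs, abs_abs]
  simp only [Pi.add_apply]
  rw [← sq_abs]
  have h2 : |h' x| ≤ (|h' x|^2 * (w x)^2 + 1) / w x := by
    rw [le_div_iff₀ h0]
    nlinarith [sq_nonneg (|h' x| * w x - 1), mul_nonneg ht (sub_nonneg.2 h1)]
  calc |h' x| ≤ (|h' x|^2 * (w x)^2 + 1) / w x := h2
    _ = |h' x|^2 * w x + (w x)⁻¹ := by field_simp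

lemma cauchy_schwarz {w h h' : ℝ → ℝ} (hw : GoodWeight w) (hh : IsHw w h h') :
    (∫ x in Set.Ici (0:ℝ), |h' x|) ≤
      Real.sqrt (∫ x in Set.Ici (0:ℝ), (h' x) ^ 2 * w x) *
      Real.sqrt (∫ x in Set.Ici (0:ℝ), (w x) ^ (-(1/3) : ℝ)) := by
  set μ := volume.restrict (Set.Ici (0:ℝ)) with hμ
  set f : ℝ → ℝ := fun x => |h' x| * Real.sqrt (w x) with hf
  set g : ℝ → ℝ := fun x => (Real.sqrt (w x))⁻¹ with hg
  have hwm : AEStronglyMeasurable w μ :=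
    hw.2.2.1.continuousOn.aestronglyMeasurable measurableSet_Ici
  have hfm : AEStronglyMeasurable f μ :=
    (hh.1.abs.aestronglyMeasurable.restrict).mul
      (Real.continuous_sqrt.measurable.comp_aemeasurable hwm.aemeasurable).aestronglyMeasurable
  have hgm : AEStronglyMeasurable g μ := (AEMeasurable.inv (Real.continuous_sqrt.measurable.comp_aemeasurable hwm.aemeasurable)).aestronglyMeasurable
  have hwpos : ∀ᵐ x ∂μ, 0 < w x :=
    (ae_restrict_iff' measurableSet_Ici).2 (ae_of_all _ fun x hx =>
      lt_of_lt_of_le one_pos (hw.1 x hx))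
  have hf2 : Integrable (fun x => f x ^ 2) μ := by
    refine (hh.2.1.congr ?_)
    filter_upwards [hwpos] with x hx
    rw [hf]; simp only
    rw [mul_pow, sq_abs, Real.sq_sqrt hx.le]
  have hg2 : Integrable (fun x => g x ^ 2) μ := by
    refine ((winv_int hw).congr ?_)
    filter_upwards [hwpos] with x hx
    rw [hg]; simp only
    rw [inv_pow, Real.sq_sqrt hx.le]
  have hfl : MemLp f (ENNReal.ofReal 2) μ := by
    rw [show ENNReal.ofReal 2 = 2 by norm_num]
    exact (memLp_two_iff_integrable_sq hfm).2 hf2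
  have hgl : MemLp g (ENNReal.ofReal 2) μ := by
    rw [show ENNReal.ofReal 2 = 2 by norm_num]
    exact (memLp_two_iff_integrable_sq hgm).2 hg2
  have hpq : Real.HolderConjugate 2 2 := ⟨by norm_num, by norm_num, by norm_num⟩
  have hH := integral_mul_le_Lp_mul_Lq_of_nonneg hpq
    (ae_of_all _ fun x => mul_nonneg (abs_nonneg _) (Real.sqrt_nonneg _))
    (ae_of_all _ fun x => inv_nonneg.2 (Real.sqrt_nonneg _)) hfl hgl
  have heq : ∫ x, f x * g x ∂μ = ∫ x in Set.Ici (0:ℝ), |h' x| := by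
    refine integral_congr_ae ?_
    filter_upwards [hwpos] with x hx
    have : Real.sqrt (w x) ≠ 0 := ne_of_gt (Real.sqrt_pos.2 hx)
    simp only [hf, hg]; field_simp
  have hIf : ∫ x, f x ^ (2:ℝ) ∂μ = ∫ x in Set.Ici (0:ℝ), (h' x) ^ 2 * w x := by
    refine integral_congr_ae ?_
    filter_upwards [hwpos] with x hx
    rw [hf]; simp only
    rw [Real.rpow_two, mul_pow, sq_abs, Real.sq_sqrt hx.le]
  have hIg : ∫ x, g x ^ (2:ℝ) ∂μ ≤ ∫ x in Set.Ici (0:ℝ), (w x) ^ (-(1/3) : ℝ) := by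
    have : ∫ x, g x ^ (2:ℝ) ∂μ = ∫ x in Set.Ici (0:ℝ), (w x)⁻¹ := by
      refine integral_congr_ae ?_
      filter_upwards [hwpos] with x hx
      rw [hg]; simp only
      rw [Real.rpow_two, inv_pow, Real.sq_sqrt hx.le]
    rw [this]; exact winv_le hw
  rw [heq, hIf] at hH
  calc (∫ x in Set.Ici (0:ℝ), |h' x|)
      ≤ (∫ x in Set.Ici (0:ℝ), (h' x) ^ 2 * w x) ^ ((1:ℝ)/2) * (∫ x, g x ^ (2:ℝ) ∂μ) ^ ((1:ℝ)/2) := hH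
    _ ≤ Real.sqrt (∫ x in Set.Ici (0:ℝ), (h' x) ^ 2 * w x) *
        Real.sqrt (∫ x in Set.Ici (0:ℝ), (w x) ^ (-(1/3) : ℝ)) := by
        have hIw0 : (0:ℝ) ≤ ∫ x in Set.Ici (0:ℝ), (h' x) ^ 2 * w x := by
          refine setIntegral_nonneg measurableSet_Ici fun x hx => ?_
          exact mul_nonneg (sq_nonneg _) (le_trans zero_le_one (hw.1 x hx))
        have e1 : ((∫ x in Set.Ici (0:ℝ), (h' x) ^ 2 * w x)) ^ ((1:ℝ)/2)
            = Real.sqrt (∫ x in Set.Ici (0:ℝ), (h' x) ^ 2 * w x) := (Real.sqrt_eq_rpow _).symm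
        have hIg0 : (0:ℝ) ≤ ∫ x, g x ^ (2:ℝ) ∂μ := by
          refine integral_nonneg fun x => ?_
          rw [Real.rpow_two]; exact sq_nonneg _
        have e2 : (∫ x, g x ^ (2:ℝ) ∂μ) ^ ((1:ℝ)/2) = Real.sqrt (∫ x, g x ^ (2:ℝ) ∂μ) :=
          (Real.sqrt_eq_rpow _).symm
        rw [e1, e2]
        exact mul_le_mul_of_nonneg_left (Real.sqrt_le_sqrt hIg) (Real.sqrt_nonneg _)

lemma normW_nonneg (w h h' : ℝ → ℝ) : 0 ≤ normW w h h' := Real.sqrt_nonneg _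

lemma sup_bound {w h h' : ℝ → ℝ} (hw : GoodWeight w) (hh : IsHw w h h') {x : ℝ} (hx : 0 ≤ x) :
    |h x| ≤ (1 + Real.sqrt (∫ y in Set.Ici (0:ℝ), (w y) ^ (-(1/3):ℝ))) * normW w h h' := by
  have hIw0 : 0 ≤ ∫ y in Set.Ici (0:ℝ), (h' y)^2 * w y :=
    setIntegral_nonneg measurableSet_Ici fun y hy =>
      mul_nonneg (sq_nonneg _) (le_trans zero_le_one (hw.1 y hy))
  have hn0 : |h 0| ≤ normW w h h' := by
    rw [normW, ← Real.sqrt_sq_eq_abs]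
    exact Real.sqrt_le_sqrt (by linarith)
  have hsqIw : Real.sqrt (∫ y in Set.Ici (0:ℝ), (h' y)^2 * w y) ≤ normW w h h' := by
    rw [normW]
    exact Real.sqrt_le_sqrt (by nlinarith [sq_nonneg (h 0)])
  have hintabs := habs_int hw hh
  have habs0 : 0 ≤ᵐ[volume.restrict (Set.Ici (0:ℝ))] fun y => |h' y| :=
    ae_of_all _ fun y => abs_nonneg _
  have hIoc : (∫ y in Set.Ioc (0:ℝ) x, |h' y|) ≤ ∫ y in Set.Ici (0:ℝ), |h' y| :=
    setIntegral_mono_set hintabs habs0 (HasSubset.Subset.eventuallyLE (fun y hy => le_of_lt hy.1))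
  have hform := hh.2.2 x hx
  have h1 : |h x| ≤ |h 0| + |∫ y in (0:ℝ)..x, h' y| := by
    rw [hform]; exact abs_add_le _ _
  have h2 : |∫ y in (0:ℝ)..x, h' y| ≤ ∫ y in Set.Ioc (0:ℝ) x, |h' y| := by
    refine (intervalIntegral.abs_integral_le_integral_abs hx).trans_eq ?_
    rw [intervalIntegral.integral_of_le hx]
  have hcs := cauchy_schwarz hw hh
  have hA0 : 0 ≤ Real.sqrt (∫ y in Set.Ici (0:ℝ), (w y) ^ (-(1/3):ℝ)) := Real.sqrt_nonneg _
  have h3 : Real.sqrt (∫ y in Set.Ici (0:ℝ), (h' y)^2 * w y) *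
      Real.sqrt (∫ y in Set.Ici (0:ℝ), (w y) ^ (-(1/3):ℝ)) ≤
      normW w h h' * Real.sqrt (∫ y in Set.Ici (0:ℝ), (w y) ^ (-(1/3):ℝ)) :=
    mul_le_mul_of_nonneg_right hsqIw hA0
  have := normW_nonneg w h h'
  nlinarith

lemma h_contOn {w h h' : ℝ → ℝ} (hw : GoodWeight w) (hh : IsHw w h h') {T : ℝ} (hT : 0 ≤ T) :
    ContinuousOn h (Set.Icc 0 T) := by
  have h'int : IntegrableOn h' (Set.uIcc (0:ℝ) T) := by
    rw [Set.uIcc_of_le hT]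
    have hici : IntegrableOn h' (Set.Ici (0:ℝ)) :=
      Integrable.mono' (habs_int hw hh) hh.1.aestronglyMeasurable.restrict
        (ae_of_all _ fun y => le_of_eq (Real.norm_eq_abs _))
    exact hici.mono Set.Icc_subset_Ici_self le_rfl
  have hprim := intervalIntegral.continuousOn_primitive_interval h'int
  rw [Set.uIcc_of_le hT] at hprim
  have : ContinuousOn (fun x => h 0 + ∫ t in (0:ℝ)..x, h' t) (Set.Icc 0 T) :=
    continuousOn_const.add hprim
  exact this.congr fun y hy => hh.2.2 y hy.1

/-- time-Lipschitz continuity of the payoff `Ψ`. -/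
theorem stmt16 (w : ℝ → ℝ) (hw : GoodWeight w) :
    ∃ C₂ > (0:ℝ), ∀ T K : ℝ, 0 < T → 0 < K → K < 1 →
      ∀ h h' : ℝ → ℝ, IsHw w h h' →
      ∀ s t : ℝ, s ∈ Set.Icc (0:ℝ) T → t ∈ Set.Icc (0:ℝ) T → s ≤ t →
        |Psi T K s h - Psi T K t h| ≤ C₂ * normW w h h' * (t - s) := by
  set A := Real.sqrt (∫ y in Set.Ici (0:ℝ), (w y) ^ (-(1/3):ℝ)) with hA
  have hA0 : 0 ≤ A := Real.sqrt_nonneg _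
  refine ⟨1 + A, by linarith, ?_⟩
  intro T K hT hK0 hK1 h h' hh s t hs ht hst
  obtain ⟨hs0, hsT⟩ := hs
  obtain ⟨ht0, htT⟩ := ht
  set a := T - t with ha
  set b := T - s with hb
  have ha0 : 0 ≤ a := by simp [ha]; linarith
  have hab : a ≤ b := by simp [ha, hb]; linarith
  have hbT : b ≤ T := by simp [hb]; linarith
  have hcont : ContinuousOn h (Set.Icc 0 T) := h_contOn hw hh hT.le
  have hint1 : IntervalIntegrable h volume 0 a := by
    refine (hcont.mono ?_).intervalIntegrable
    rw [Set.uIcc_of_le ha0]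
    exact Set.Icc_subset_Icc le_rfl (le_trans hab hbT)
  have hint2 : IntervalIntegrable h volume a b := by
    refine (hcont.mono ?_).intervalIntegrable
    rw [Set.uIcc_of_le hab]
    exact Set.Icc_subset_Icc ha0 hbT
  have hadd := intervalIntegral.integral_add_adjacent_intervals hint1 hint2
  have hM : 0 ≤ (1 + A) * normW w h h' :=
    mul_nonneg (by linarith) (normW_nonneg w h h')
  have key : |∫ x in a..b, h x| ≤ ((1 + A) * normW w h h') * (b - a) := by
    have hb1 := intervalIntegral.norm_integral_le_of_norm_le_const
      (C := (1 + A) * normW w h h') (f := h) (a := a) (b := b) ?_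
    · rw [Real.norm_eq_abs] at hb1
      rwa [abs_of_nonneg (by linarith : (0:ℝ) ≤ b - a)] at hb1
    · intro x hx
      rw [Set.uIoc_of_le hab] at hx
      rw [Real.norm_eq_abs]
      exact sup_bound hw hh (le_trans ha0 hx.1.le)
  have hphi := phi_lip' hK0 hK1 (∫ x in (0:ℝ)..a, h x) (∫ x in (0:ℝ)..b, h x)
  have hdiff : (∫ x in (0:ℝ)..b, h x) - (∫ x in (0:ℝ)..a, h x) = ∫ x in a..b, h x := by
    linarith [hadd]
  have hPs : Psi T K s h = max (K - Real.exp (-(∫ x in (0:ℝ)..b, h x))) 0 := rfl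
  have hPt : Psi T K t h = max (K - Real.exp (-(∫ x in (0:ℝ)..a, h x))) 0 := rfl
  rw [hPs, hPt]
  calc |max (K - Real.exp (-(∫ x in (0:ℝ)..b, h x))) 0
        - max (K - Real.exp (-(∫ x in (0:ℝ)..a, h x))) 0|
      ≤ |(∫ x in (0:ℝ)..b, h x) - (∫ x in (0:ℝ)..a, h x)| := hphi
    _ = |∫ x in a..b, h x| := by rw [hdiff]
    _ ≤ ((1 + A) * normW w h h') * (b - a) := key
    _ = (1 + A) * normW w h h' * (t - s) := by rw [ha, hb]; ring
end
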